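/- Properties of the Laplace-convolved spike g_0: the function g_0 = φ * γ_0 satisfies g_0'' = λ_0²·(g_0 − φ) on ℝ; moreover, for n large enough, 1/g_0(x) ≤ 2/φ(x) for all real x, and |g_0(x) − φ(x)| ≤ 1/λ_0² for all real x. -/

import Mathlib

/-!
Statement 15: properties of the Laplace-convolved spike g₀.
-/

open MeasureTheory Real Set

noncomputable section

/-- Standard normal density. -/
def phi (x : ℝ) : ℝ := Real.exp (-x ^ 2 / 2) / Real.sqrt (2 * Real.pi)

/-- Spike inverse-scale `λ₀ = 5√(2π) n`. -/
def lam0 (n : ℕ) : ℝ := 5 * Real.sqrt (2 * Real.pi) * n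

/-- Slab scale parameter `λ₁ = 0.05`. -/
def lam1 : ℝ := 0.05

/-- Spike density: Laplace with parameter `λ₀`. -/
def gamma0 (n : ℕ) (x : ℝ) : ℝ := lam0 n / 2 * Real.exp (-(lam0 n) * |x|)

/-- Slab density: Cauchy with scale `1/λ₁`. -/
def gamma1 (x : ℝ) : ℝ := lam1 / Real.pi * (1 + lam1 ^ 2 * x ^ 2)⁻¹

/-- `g₀ = φ * γ₀`. -/
def g0 (n : ℕ) (x : ℝ) : ℝ := ∫ u, phi (x - u) * gamma0 n u

/-- `g₁ = φ * γ₁`. -/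
def g1 (x : ℝ) : ℝ := ∫ u, phi (x - u) * gamma1 u

/-- `β(x) = g₁(x)/g₀(x) - 1` for the SSL prior. -/
def betaSSL (n : ℕ) (x : ℝ) : ℝ := g1 x / g0 n x - 1

/-!
Splitting the convolution with the Laplace density `γ` at `y = x` gives `f ∗ γ = λ/2 (L + R)` with
`L(x) = ∫_{y ≤ x} f(y) e^{-λ(x-y)} dy` and `R(x) = ∫_{y > x} f(y) e^{-λ(y-x)} dy`. Since
`L' = -λL + f` and `R' = λR - f`, we get `(f ∗ γ)' = λ²/2 (R - L)` and
`(f ∗ γ)'' = λ²/2 (λ (L + R) - 2f) = λ² (f ∗ γ - f)`.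

The Laplace density has mean `0` and variance `2/λ²`. Integrating the Taylor bound
`|φ(x - u) - φ(x) + uφ'(x)| ≤ u²/2` (valid since `|φ''| ≤ 1`) against it gives `|g₀ - φ| ≤ 1/λ²`,
and integrating `φ(x - u) = φ(x) e^{xu - u²/2} ≥ φ(x) (1 + xu - u²/2)` gives
`g₀ ≥ (1 - 1/λ²) φ ≥ φ/2`.
-/

section Taylor

variable {f f' f'' : ℝ → ℝ} {M : ℝ}

lemma abs_sub_sub_mul_le_of_nonneg (hf : ∀ x, HasDerivAt f (f' x) x)
    (hf' : ∀ x, HasDerivAt f' (f'' x) x) (hM : ∀ x, |f'' x| ≤ M) (x : ℝ) {h : ℝ} (hh : 0 ≤ h) :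
    |f (x + h) - f x - f' x * h| ≤ M * h ^ 2 / 2 := by
  have hlip : ∀ t, 0 ≤ t → |f' (x + t) - f' x| ≤ M * t := fun t ht => by
    simpa [abs_of_nonneg ht] using Convex.norm_image_sub_le_of_norm_hasDerivWithin_le
      (fun y _ => (hf' y).hasDerivWithinAt) (fun y _ => hM y) convex_univ (mem_univ x)
      (mem_univ (x + t))
  have hderiv : ∀ t, HasDerivAt (fun t => f (x + t) - f x - f' x * t) (f' (x + t) - f' x) t :=
    fun t => ((((hf (x + t)).comp t ((hasDerivAt_id t).const_add x)).sub_const (f x)).sub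
      ((hasDerivAt_id t).const_mul (f' x))).congr_deriv (by simp)
  refine image_norm_le_of_norm_deriv_right_le_deriv_boundary (a := 0) (b := h)
    (f' := fun t => f' (x + t) - f' x) (B := fun t => M * t ^ 2 / 2) (B' := fun t => M * t)
    (fun t _ => (hderiv t).continuousAt.continuousWithinAt)
    (fun t _ => (hderiv t).hasDerivWithinAt) (by simp) (fun t => ?_)
    (fun t ht => hlip t ht.1) ⟨hh, le_rfl⟩
  simpa using ((hasDerivAt_pow 2 t).const_mul M).div_const 2 |>.congr_deriv (by ring)

lemma abs_sub_sub_mul_le (hf : ∀ x, HasDerivAt f (f' x) x)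
    (hf' : ∀ x, HasDerivAt f' (f'' x) x) (hM : ∀ x, |f'' x| ≤ M) (x h : ℝ) :
    |f (x + h) - f x - f' x * h| ≤ M * h ^ 2 / 2 := by
  rcases le_total 0 h with hh | hh
  · exact abs_sub_sub_mul_le_of_nonneg hf hf' hM x hh
  have hneg : ∀ {g g' : ℝ → ℝ}, (∀ x, HasDerivAt g (g' x) x) →
      ∀ y, HasDerivAt (fun y => g (-y)) (-g' (-y)) y := fun hg y =>
    ((hg (-y)).comp y (hasDerivAt_neg y)).congr_deriv (by simp)
  have := abs_sub_sub_mul_le_of_nonneg (hneg hf) (fun y => ((hneg hf' y).neg).congr_deriv (by simp))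
    (fun y => hM (-y)) (-x) (neg_nonneg.2 hh)
  simpa [neg_add_rev, sub_eq_add_neg, add_comm] using this

end Taylor

lemma hasDerivAt_setIntegral_Iic {h : ℝ → ℝ} (hc : Continuous h) (hi : Integrable h) (x : ℝ) :
    HasDerivAt (fun x => ∫ y in Iic x, h y) (h x) x := by
  have hsplit : (fun x => ∫ y in Iic x, h y) = fun x => (∫ y in Iic 0, h y) + ∫ y in 0..x, h y := by
    ext x
    rw [← intervalIntegral.integral_Iic_sub_Iic hi.integrableOn hi.integrableOn]
    ring
  rw [hsplit]
  exact (hc.integral_hasStrictDerivAt 0 x).hasDerivAt.const_add _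

lemma hasDerivAt_setIntegral_Ioi {h : ℝ → ℝ} (hc : Continuous h) (hi : Integrable h) (x : ℝ) :
    HasDerivAt (fun x => ∫ y in Ioi x, h y) (-h x) x := by
  have hsplit : (fun x => ∫ y in Ioi x, h y) = fun x => (∫ y in Ioi 0, h y) - ∫ y in 0..x, h y := by
    ext x
    rw [← intervalIntegral.integral_Ioi_sub_Ioi' hi.integrableOn hi.integrableOn]
    ring
  rw [hsplit]
  exact (hc.integral_hasStrictDerivAt 0 x).hasDerivAt.const_sub _

def laplaceDensity (l u : ℝ) : ℝ := l / 2 * exp (-l * |u|)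

section LaplaceDensity

variable {l : ℝ}

lemma laplaceDensity_nonneg (hl : 0 ≤ l) (u : ℝ) : 0 ≤ laplaceDensity l u := by
  unfold laplaceDensity; positivity

lemma laplaceDensity_neg (l u : ℝ) : laplaceDensity l (-u) = laplaceDensity l u := by
  simp [laplaceDensity]

lemma continuous_laplaceDensity (l : ℝ) : Continuous (laplaceDensity l) := by
  unfold laplaceDensity; fun_prop

lemma integral_abs_pow_mul_laplaceDensity (hl : 0 < l) (k : ℕ) :
    ∫ u, |u| ^ k * laplaceDensity l u = k.factorial / l ^ k := by
  have hΓ := integral_rpow_mul_exp_neg_mul_Ioi (a := k + 1) (by positivity) hl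
  rw [Gamma_nat_eq_factorial, add_sub_cancel_right, ← Nat.cast_succ, rpow_natCast] at hΓ
  have hIoi : ∫ t in Ioi (0 : ℝ), t ^ k * (l / 2 * exp (-l * t))
      = l / 2 * ∫ t in Ioi (0 : ℝ), t ^ (k : ℝ) * exp (-(l * t)) := by
    rw [← integral_const_mul]
    refine setIntegral_congr_fun measurableSet_Ioi fun t _ => ?_
    rw [rpow_natCast]
    ring_nf
  have hcomp := integral_comp_abs (f := fun t => t ^ k * (l / 2 * exp (-l * t)))
  simp only [laplaceDensity]
  rw [hcomp, hIoi, hΓ, div_pow, one_pow, pow_succ]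
  field_simp

lemma integrable_pow_mul_laplaceDensity (hl : 0 < l) (k : ℕ) :
    Integrable fun u => u ^ k * laplaceDensity l u := by
  -- the moment formula holds without integrability assumptions, and a nonzero integral forces it
  have habs : Integrable fun u => |u| ^ k * laplaceDensity l u :=
    .of_integral_ne_zero (by rw [integral_abs_pow_mul_laplaceDensity hl]; positivity)
  refine habs.mono' ((continuous_pow k).mul (continuous_laplaceDensity l)).aestronglyMeasurable
    (ae_of_all _ fun u => ?_)
  rw [norm_mul, norm_pow, Real.norm_eq_abs, Real.norm_of_nonneg (laplaceDensity_nonneg hl.le u)]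

lemma integral_mul_laplaceDensity (l : ℝ) : ∫ u, u * laplaceDensity l u = 0 := by
  have h := integral_neg_eq_self (fun u => u * laplaceDensity l u) volume
  simp only [laplaceDensity_neg, neg_mul, integral_neg] at h
  linarith

lemma quadratic_mul_laplaceDensity (a b c : ℝ) :
    (fun u => (a + b * u + c * u ^ 2) * laplaceDensity l u) = fun u =>
      a * laplaceDensity l u + b * (u * laplaceDensity l u) + c * (u ^ 2 * laplaceDensity l u) := by
  ext u; ring

lemma integrable_quadratic_mul_laplaceDensity (hl : 0 < l) (a b c : ℝ) :
    Integrable fun u => (a + b * u + c * u ^ 2) * laplaceDensity l u := by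
  have h0 := integrable_pow_mul_laplaceDensity hl 0
  have h1 := integrable_pow_mul_laplaceDensity hl 1
  simp only [pow_zero, one_mul, pow_one] at h0 h1
  rw [quadratic_mul_laplaceDensity]
  exact ((h0.const_mul a).add (h1.const_mul b)).add
    ((integrable_pow_mul_laplaceDensity hl 2).const_mul c)

lemma integral_quadratic_mul_laplaceDensity (hl : 0 < l) (a b c : ℝ) :
    ∫ u, (a + b * u + c * u ^ 2) * laplaceDensity l u = a + 2 * c / l ^ 2 := by
  have h0 := integrable_pow_mul_laplaceDensity hl 0
  have h1 := integrable_pow_mul_laplaceDensity hl 1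
  have hmass := integral_abs_pow_mul_laplaceDensity hl 0
  have hvar := integral_abs_pow_mul_laplaceDensity hl 2
  simp only [pow_zero, one_mul, pow_one, sq_abs, Nat.factorial_zero,
    Nat.factorial_two, Nat.cast_one, Nat.cast_ofNat, div_one] at h0 h1 hmass hvar
  rw [quadratic_mul_laplaceDensity,
    integral_add (f := fun u => a * laplaceDensity l u + b * (u * laplaceDensity l u))
      ((h0.const_mul a).add (h1.const_mul b))
      ((integrable_pow_mul_laplaceDensity hl 2).const_mul c),
    integral_add (h0.const_mul a) (h1.const_mul b), integral_const_mul, integral_const_mul,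
    integral_const_mul, hmass, hvar, integral_mul_laplaceDensity]
  ring

end LaplaceDensity

def laplaceConv (l : ℝ) (f : ℝ → ℝ) (x : ℝ) : ℝ := ∫ u, f (x - u) * laplaceDensity l u

lemma abs_laplaceConv_sub_le {f f' f'' : ℝ → ℝ} {M l x : ℝ} (hl : 0 < l)
    (hf : ∀ x, HasDerivAt f (f' x) x) (hf' : ∀ x, HasDerivAt f' (f'' x) x)
    (hM : ∀ x, |f'' x| ≤ M) (hint : Integrable fun u => f (x - u) * laplaceDensity l u) :
    |laplaceConv l f x - f x| ≤ M / l ^ 2 := by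
  have hrepr : laplaceConv l f x - f x
      = ∫ u, (f (x - u) - (f x + -f' x * u + 0 * u ^ 2)) * laplaceDensity l u := by
    simp_rw [sub_mul]
    rw [integral_sub hint (integrable_quadratic_mul_laplaceDensity hl _ _ _),
      integral_quadratic_mul_laplaceDensity hl, laplaceConv]
    ring
  rw [hrepr, ← Real.norm_eq_abs]
  calc _ ≤ ∫ u, (0 + 0 * u + M / 2 * u ^ 2) * laplaceDensity l u := by
        refine norm_integral_le_of_norm_le (integrable_quadratic_mul_laplaceDensity hl _ _ _)
          (ae_of_all _ fun u => ?_)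
        have := abs_sub_sub_mul_le hf hf' hM x (-u)
        rw [norm_mul, Real.norm_of_nonneg (laplaceDensity_nonneg hl.le u), Real.norm_eq_abs]
        refine mul_le_mul_of_nonneg_right ?_ (laplaceDensity_nonneg hl.le u)
        rw [← sub_eq_add_neg, neg_sq] at this
        rw [show f (x - u) - (f x + -f' x * u + 0 * u ^ 2) = f (x - u) - f x - f' x * -u by ring]
        linarith
    _ = M / l ^ 2 := by rw [integral_quadratic_mul_laplaceDensity hl]; ring

section LaplaceConvODE

variable {f : ℝ → ℝ} {l : ℝ}

def laplaceConvLeft (l : ℝ) (f : ℝ → ℝ) (x : ℝ) : ℝ :=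
  exp (-l * x) * ∫ y in Iic x, f y * exp (l * y)

def laplaceConvRight (l : ℝ) (f : ℝ → ℝ) (x : ℝ) : ℝ :=
  exp (l * x) * ∫ y in Ioi x, f y * exp (-l * y)

lemma laplaceConv_eq (hexp : Integrable fun y => f y * exp (l * y))
    (hexp_neg : Integrable fun y => f y * exp (-l * y)) (x : ℝ) :
    laplaceConv l f x = l / 2 * (laplaceConvLeft l f x + laplaceConvRight l f x) := by
  have hleft : ∀ y ∈ Iic x,
      f y * laplaceDensity l (x - y) = l / 2 * exp (-l * x) * (f y * exp (l * y)) := by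
    intro y hy
    rw [laplaceDensity, abs_of_nonneg (sub_nonneg.2 hy), show -l * (x - y) = -l * x + l * y by ring,
      exp_add]
    ring
  have hright : ∀ y ∈ Ioi x,
      f y * laplaceDensity l (x - y) = l / 2 * exp (l * x) * (f y * exp (-l * y)) := by
    intro y hy
    rw [laplaceDensity, abs_of_neg (sub_neg.2 hy), show -l * -(x - y) = l * x + -l * y by ring,
      exp_add]
    ring
  have hIic : IntegrableOn (fun y => f y * laplaceDensity l (x - y)) (Iic x) :=
    (hexp.const_mul _).integrableOn.congr_fun (fun y hy => (hleft y hy).symm) measurableSet_Iic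
  have hIoi : IntegrableOn (fun y => f y * laplaceDensity l (x - y)) (Ioi x) :=
    (hexp_neg.const_mul _).integrableOn.congr_fun (fun y hy => (hright y hy).symm) measurableSet_Ioi
  rw [laplaceConv, ← integral_sub_left_eq_self _ volume x]
  simp only [sub_sub_cancel]
  rw [← intervalIntegral.integral_Iic_add_Ioi hIic hIoi,
    setIntegral_congr_fun measurableSet_Iic hleft, setIntegral_congr_fun measurableSet_Ioi hright,
    integral_const_mul, integral_const_mul, laplaceConvLeft, laplaceConvRight]
  ring

lemma hasDerivAt_laplaceConvLeft (hf : Continuous f) (hexp : Integrable fun y => f y * exp (l * y))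
    (x : ℝ) : HasDerivAt (laplaceConvLeft l f) (-l * laplaceConvLeft l f x + f x) x := by
  have hE := ((hasDerivAt_id' x).const_mul (-l)).exp
  refine (hE.mul (hasDerivAt_setIntegral_Iic (by fun_prop) hexp x)).congr_deriv ?_
  have hcancel : exp (-l * x) * exp (l * x) = 1 := by rw [← exp_add]; simp
  rw [laplaceConvLeft]
  linear_combination f x * hcancel

lemma hasDerivAt_laplaceConvRight (hf : Continuous f)
    (hexp_neg : Integrable fun y => f y * exp (-l * y)) (x : ℝ) :
    HasDerivAt (laplaceConvRight l f) (l * laplaceConvRight l f x - f x) x := by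
  have hE := ((hasDerivAt_id' x).const_mul l).exp
  refine (hE.mul (hasDerivAt_setIntegral_Ioi (by fun_prop) hexp_neg x)).congr_deriv ?_
  have hcancel : exp (l * x) * exp (-l * x) = 1 := by rw [← exp_add]; simp
  rw [laplaceConvRight]
  linear_combination -f x * hcancel

variable (hf : Continuous f) (hexp : Integrable fun y => f y * exp (l * y))
  (hexp_neg : Integrable fun y => f y * exp (-l * y))
include hf hexp hexp_neg

lemma deriv_laplaceConv :
    deriv (laplaceConv l f) =
      fun x => l ^ 2 / 2 * (laplaceConvRight l f x - laplaceConvLeft l f x) := by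
  ext x
  rw [funext (laplaceConv_eq hexp hexp_neg)]
  refine ((((hasDerivAt_laplaceConvLeft hf hexp x).add
    (hasDerivAt_laplaceConvRight hf hexp_neg x)).const_mul (l / 2)).congr_deriv ?_).deriv
  ring

theorem deriv_deriv_laplaceConv (x : ℝ) :
    deriv (deriv (laplaceConv l f)) x = l ^ 2 * (laplaceConv l f x - f x) := by
  rw [deriv_laplaceConv hf hexp hexp_neg, laplaceConv_eq hexp hexp_neg]
  refine ((((hasDerivAt_laplaceConvRight hf hexp_neg x).sub
    (hasDerivAt_laplaceConvLeft hf hexp x)).const_mul (l ^ 2 / 2)).congr_deriv ?_).deriv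
  ring

end LaplaceConvODE

lemma two_le_sqrt_two_pi : 2 ≤ √(2 * π) :=
  Real.le_sqrt_of_sq_le (by nlinarith [pi_gt_three])

lemma phi_eq_gaussianPDFReal : phi = ProbabilityTheory.gaussianPDFReal 0 1 := by
  ext x
  simp [phi, ProbabilityTheory.gaussianPDFReal, div_eq_inv_mul]

lemma phi_pos (x : ℝ) : 0 < phi x := by
  rw [phi]; positivity

lemma phi_le_one (x : ℝ) : phi x ≤ 1 := by
  rw [phi, div_le_one (by linarith [two_le_sqrt_two_pi])]
  linarith [exp_le_one_iff.2 (by nlinarith [sq_nonneg x] : -x ^ 2 / 2 ≤ 0), two_le_sqrt_two_pi]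

lemma continuous_phi : Continuous phi := by
  unfold phi; fun_prop

lemma phi_sub (x u : ℝ) : phi (x - u) = phi x * exp (x * u - u ^ 2 / 2) := by
  simp only [phi, div_mul_eq_mul_div, ← exp_add]
  ring_nf

lemma integrable_phi_mul_exp (c : ℝ) : Integrable fun y => phi y * exp (c * y) := by
  have h : ∀ y, phi y * exp (c * y) = exp (c ^ 2 / 2) * phi (y - c) := fun y => by
    rw [phi_sub, mul_left_comm, ← exp_add]
    ring_nf
  simp_rw [h, phi_eq_gaussianPDFReal, ProbabilityTheory.gaussianPDFReal_sub, zero_add]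
  exact (ProbabilityTheory.integrable_gaussianPDFReal c 1).const_mul _

lemma hasDerivAt_phi (x : ℝ) : HasDerivAt phi (-x * phi x) x := by
  have := (((hasDerivAt_pow 2 x).neg.div_const 2).exp).div_const √(2 * π)
  exact this.congr_deriv (by simp [phi]; ring)

lemma hasDerivAt_neg_mul_phi (x : ℝ) :
    HasDerivAt (fun x => -x * phi x) ((x ^ 2 - 1) * phi x) x :=
  ((hasDerivAt_neg x).mul (hasDerivAt_phi x)).congr_deriv (by ring)

lemma abs_sq_sub_one_mul_phi_le_one (x : ℝ) : |(x ^ 2 - 1) * phi x| ≤ 1 := by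
  have hexp : x ^ 2 + 1 ≤ 2 * exp (x ^ 2 / 2) := by linarith [add_one_le_exp (x ^ 2 / 2)]
  have hcancel : exp (x ^ 2 / 2) * exp (-x ^ 2 / 2) = 1 := by rw [← exp_add]; ring_nf; simp
  rw [abs_mul, abs_of_pos (phi_pos x), phi, mul_div_assoc', div_le_one (by positivity)]
  calc |x ^ 2 - 1| * exp (-x ^ 2 / 2) ≤ 2 * exp (x ^ 2 / 2) * exp (-x ^ 2 / 2) := by
        gcongr
        exact (abs_sub _ _).trans (by simpa using hexp)
    _ ≤ √(2 * π) := by rw [mul_assoc, hcancel]; linarith [two_le_sqrt_two_pi]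

lemma integrable_phi_sub_mul_laplaceDensity {l : ℝ} (hl : 0 < l) (x : ℝ) :
    Integrable fun u => phi (x - u) * laplaceDensity l u := by
  have h0 := integrable_pow_mul_laplaceDensity hl 0
  simp only [pow_zero, one_mul] at h0
  refine h0.bdd_mul (c := 1) (continuous_phi.comp (continuous_sub_left x)).aestronglyMeasurable
    (ae_of_all _ fun u => ?_)
  rw [Real.norm_of_nonneg (phi_pos _).le]
  exact phi_le_one _

lemma phi_mul_one_sub_le_laplaceConv_phi {l : ℝ} (hl : 0 < l) (x : ℝ) :
    phi x * (1 - (l ^ 2)⁻¹) ≤ laplaceConv l phi x := by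
  calc phi x * (1 - (l ^ 2)⁻¹)
      = ∫ u, (phi x + x * phi x * u + -(phi x / 2) * u ^ 2) * laplaceDensity l u := by
        rw [integral_quadratic_mul_laplaceDensity hl]; ring
    _ ≤ laplaceConv l phi x := by
        refine integral_mono (integrable_quadratic_mul_laplaceDensity hl _ _ _)
          (integrable_phi_sub_mul_laplaceDensity hl x) fun u => ?_
        refine mul_le_mul_of_nonneg_right ?_ (laplaceDensity_nonneg hl.le u)
        rw [phi_sub]
        nlinarith [add_one_le_exp (x * u - u ^ 2 / 2), phi_pos x]

lemma phi_div_two_le_laplaceConv_phi {l : ℝ} (hl : 2 ≤ l) (x : ℝ) :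
    phi x / 2 ≤ laplaceConv l phi x := by
  refine le_trans ?_ (phi_mul_one_sub_le_laplaceConv_phi (by linarith) x)
  have : (l ^ 2)⁻¹ ≤ 1 / 2 := by rw [inv_le_comm₀ (by positivity) (by norm_num)]; nlinarith
  nlinarith [phi_pos x]

lemma g0_eq_laplaceConv (n : ℕ) : g0 n = laplaceConv (lam0 n) phi := rfl

lemma two_le_lam0 {n : ℕ} (hn : 1 ≤ n) : 2 ≤ lam0 n := by
  have h2 := two_le_sqrt_two_pi
  have hn' : (1 : ℝ) ≤ n := by exact_mod_cast hn
  rw [lam0]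
  nlinarith

/-- Lemma: properties of `g₀ = φ * γ₀`.
`g₀'' = λ₀² (g₀ - φ)` on `ℝ`, and for `n` large enough,
`1/g₀ ≤ 2/φ` and `|g₀ - φ| ≤ 1/λ₀²` everywhere. -/
theorem g0_properties :
    (∀ n : ℕ, ∀ x : ℝ, deriv (deriv (g0 n)) x = lam0 n ^ 2 * (g0 n x - phi x)) ∧
    (∃ N0 : ℕ, ∀ n : ℕ, N0 ≤ n → ∀ x : ℝ,
      (g0 n x)⁻¹ ≤ 2 / phi x ∧ |g0 n x - phi x| ≤ (lam0 n ^ 2)⁻¹) := by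
  simp only [g0_eq_laplaceConv]
  refine ⟨fun n x => deriv_deriv_laplaceConv continuous_phi (integrable_phi_mul_exp _)
    (integrable_phi_mul_exp _) x, 1, fun n hn x => ?_⟩
  have hl := two_le_lam0 hn
  have hl₀ : 0 < lam0 n := by linarith
  refine ⟨?_, ?_⟩
  · rw [← inv_div]
    exact inv_anti₀ (half_pos (phi_pos x)) (phi_div_two_le_laplaceConv_phi hl x)
  · simpa using abs_laplaceConv_sub_le hl₀ hasDerivAt_phi hasDerivAt_neg_mul_phi
      abs_sq_sub_one_mul_phi_le_one (integrable_phi_sub_mul_laplaceDensity hl₀ x)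

end
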